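/- Let k ≥ 1 and let v : Fin k → ℕ satisfy v i ≥ 1 for all i and gcd(v 1, …, v k) = 1; set V = Σ_i v i. For m ≥ 1 put L = V·m and let N_{v,m} denote the number of rotation-equivalence classes of words w : Fin L → Fin k having exactly v i · m occurrences of each letter i (v-balanced necklaces of length L). Then L · N_{v,m} = Σ_{d ∣ m} φ(d) · ( (L/d)! / ∏_i (v i · m / d)! ). -/

import Mathlib

/-- The rotation of a word `w : Fin L → A` by `r` positions. -/
def rotate {L : ℕ} {A : Type*} (r : ℕ) (w : Fin L → A) : Fin L → A :=
  fun i => w ⟨((i : ℕ) + r) % L, Nat.mod_lt _ (Nat.lt_of_le_of_lt (Nat.zero_le _) i.isLt)⟩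

/-- Rotation-equivalence of words: `w'` is a rotation of `w`. -/
def rotEquiv {L : ℕ} {A : Type*} (w w' : Fin L → A) : Prop :=
  ∃ r : ℕ, w' = rotate r w

/-!
Burnside's lemma for the rotation action of `ZMod L` on the balanced words gives
`L · N = ∑_g |Fix g|`. A word is fixed by `g` iff it is periodic with period
`gcd (g, L) = L / ord g`, i.e. the `ord g`-fold repetition of a block of length `L / ord g`;
the repetition has content `v · m` iff the block has content `v · m / ord g`, which is possible
only when `ord g ∣ m` because `gcd v = 1`, and then there are multinomially many blocks.
Finally each `d ∣ L` is the order of exactly `φ d` elements of `ZMod L`.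
-/

open Finset AddAction

section Content
variable {α ι : Type*} [Fintype α] [DecidableEq ι]

lemma card_filter_comp_perm (w : α → ι) (σ : Equiv.Perm α) (i : ι) :
    #{a | w (σ a) = i} = #{a | w a = i} :=
  card_equiv σ (by simp)

lemma exists_perm_comp_eq_of_card_filter_eq {w w' : α → ι}
    (h : ∀ i, #{a | w a = i} = #{a | w' a = i}) : ∃ σ : Equiv.Perm α, w' ∘ σ = w :=
  let e i : {a // w a = i} ≃ {a // w' a = i} :=
    Fintype.equivOfCardEq (by simpa only [Fintype.card_subtype] using h i)
  ⟨Equiv.ofFiberEquiv e, funext (Equiv.ofFiberEquiv_map e)⟩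

lemma exists_card_filter_eq [Fintype ι] (C : ι → ℕ) (hC : ∑ i, C i = Fintype.card α) :
    ∃ w : α → ι, ∀ i, #{a | w a = i} = C i := by
  let e : α ≃ Σ i, Fin (C i) := Fintype.equivOfCardEq (by simp [hC])
  refine ⟨fun a => (e a).1, fun i => ?_⟩
  rw [← Fintype.card_subtype, ← Fintype.card_fin (C i)]
  exact Fintype.card_congr ((e.subtypeEquiv fun _ => Iff.rfl).trans (Equiv.sigmaSubtype i))

theorem card_fun_card_filter_eq_multinomial [Fintype ι] (C : ι → ℕ)
    (hC : ∑ i, C i = Fintype.card α) :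
    Nat.card {w : α → ι // ∀ i, #{a | w a = i} = C i} = Nat.multinomial univ C := by
  classical
  obtain ⟨w₀, hw₀⟩ := exists_card_filter_eq C hC
  have horbit : MulAction.orbit (Equiv.Perm α)ᵈᵐᵃ w₀ = {w | ∀ i, #{a | w a = i} = C i} := by
    ext w
    constructor
    · rintro ⟨σ, rfl⟩ i
      exact (card_filter_comp_perm w₀ _ i).trans (hw₀ i)
    · intro hw
      obtain ⟨σ, hσ⟩ :=
        exists_perm_comp_eq_of_card_filter_eq fun i => (hw i).trans (hw₀ i).symm
      exact ⟨DomMulAct.mk σ, hσ⟩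
  have hstab : Nat.card (MulAction.stabilizer (Equiv.Perm α)ᵈᵐᵃ w₀) = ∏ i, (C i).factorial := by
    rw [Nat.card_congr (Equiv.subtypeEquiv (q := fun σ : Equiv.Perm α => w₀ ∘ σ = w₀)
      DomMulAct.mk.symm fun _ => DomMulAct.mem_stabilizer_iff),
      Nat.card_eq_fintype_card, DomMulAct.stabilizer_card]
    simp_rw [Fintype.card_subtype, hw₀]
  have key := (MulAction.stabilizer (Equiv.Perm α)ᵈᵐᵃ w₀).card_mul_index
  rw [MulAction.index_stabilizer, horbit, ← Nat.card_coe_set_eq, hstab,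
    Nat.card_congr DomMulAct.mk.symm, Nat.card_perm, Nat.card_eq_fintype_card (α := α), ← hC,
    ← Nat.multinomial_spec] at key
  exact Nat.eq_of_mul_eq_mul_left (prod_pos fun i _ => (C i).factorial_pos) key

theorem card_fun_mul_card_filter_eq [Fintype ι] {n : ℕ} (hn : 0 < n) (C : ι → ℕ)
    (hC : ∑ i, C i = n * Fintype.card α) :
    Nat.card {w : α → ι // ∀ i, n * #{a | w a = i} = C i}
      = if ∀ i, n ∣ C i then Nat.multinomial univ (fun i => C i / n) else 0 := by
  split_ifs with hdvd
  · have hsum : ∑ i, C i / n = Fintype.card α := by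
      rw [← Nat.sum_div fun i _ => hdvd i, hC, Nat.mul_div_cancel_left _ hn]
    rw [← card_fun_card_filter_eq_multinomial _ hsum]
    refine Nat.card_congr (Equiv.subtypeEquivRight fun w => forall_congr' fun i => ?_)
    rw [Nat.eq_div_iff_mul_eq_left hn.ne' (hdvd i), mul_comm, eq_comm]
  · obtain ⟨i, hi⟩ := not_forall.mp hdvd
    rw [Nat.card_eq_zero]
    exact Or.inl ⟨fun w => hi ⟨_, (w.2 i).symm⟩⟩

end Content

section Rotation
variable {L : ℕ} {A : Type*}

lemma rotate_rotate (r s : ℕ) (w : Fin L → A) : rotate r (rotate s w) = rotate (r + s) w := by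
  funext i
  simp only [rotate, Nat.mod_add_mod, Nat.add_assoc]

lemma rotate_zero (w : Fin L → A) : rotate 0 w = w :=
  funext fun i => congrArg w (Fin.ext (Nat.mod_eq_of_lt i.isLt))

lemma rotate_mod (r : ℕ) (w : Fin L → A) : rotate (r % L) w = rotate r w :=
  funext fun _ => congrArg w (Fin.ext (Nat.add_mod_mod _ _ _))

lemma rotate_mul_eq_self {c : ℕ} {w : Fin L → A} (hw : rotate c w = w) (t : ℕ) :
    rotate (c * t) w = w := by
  induction t with
  | zero => exact rotate_zero w
  | succ t ih => rw [Nat.mul_succ, ← rotate_rotate, hw, ih]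

lemma card_filter_rotate [NeZero L] [DecidableEq A] (r : ℕ) (w : Fin L → A) (a : A) :
    #{j | rotate r w j = a} = #{j | w j = a} :=
  card_equiv (Equiv.addRight (Fin.ofNat L r)) fun j => by
    simp only [mem_filter, mem_univ, true_and]; simp [rotate, Fin.add_def]

end Rotation

/- Not a global instance: when `A` is itself a `ZMod L`-module it would clash with the pointwise
action on `Fin L → A`. -/
abbrev rotationAction {L : ℕ} {A : Type*} [NeZero L] : AddAction (ZMod L) (Fin L → A) where
  vadd g w := rotate g.val w
  zero_vadd w := by
    show rotate (0 : ZMod L).val w = w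
    rw [ZMod.val_zero, rotate_zero]
  add_vadd g h w := by
    show rotate (g + h).val w = rotate g.val (rotate h.val w)
    rw [ZMod.val_add, rotate_mod, rotate_rotate]

attribute [local instance] rotationAction

section RotationAction
variable {L : ℕ} {A : Type*}

lemma vadd_eq_rotate [NeZero L] (g : ZMod L) (w : Fin L → A) : g +ᵥ w = rotate g.val w := rfl

lemma natCast_vadd_eq_rotate [NeZero L] (c : ℕ) (w : Fin L → A) :
    (c : ZMod L) +ᵥ w = rotate c w := by
  rw [vadd_eq_rotate, ZMod.val_natCast, rotate_mod]

lemma rotEquiv_iff_mem_orbit [NeZero L] {w w' : Fin L → A} :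
    rotEquiv w w' ↔ w' ∈ orbit (ZMod L) w := by
  constructor
  · rintro ⟨r, rfl⟩
    exact ⟨r, natCast_vadd_eq_rotate r w⟩
  · rintro ⟨g, rfl⟩
    exact ⟨g.val, rfl⟩

def wordsWithContent (L : ℕ) [NeZero L] [DecidableEq A] (C : A → ℕ) :
    SubAddAction (ZMod L) (Fin L → A) where
  carrier := {w | ∀ a, #{j | w j = a} = C a}
  vadd_mem' g w hw a := by rw [vadd_eq_rotate, card_filter_rotate]; exact hw a

end RotationAction

section Periodic
variable {L c : ℕ} {A : Type*}

def repeatWord [NeZero c] (L : ℕ) (f : Fin c → A) : Fin L → A := fun j => f (Fin.ofNat c j)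

lemma rotate_repeatWord [NeZero c] (hc : c ∣ L) (f : Fin c → A) :
    rotate c (repeatWord L f) = repeatWord L f :=
  funext fun j => congrArg f <| Fin.ext <| by
    simp [Nat.mod_mod_of_dvd _ hc]

lemma repeatWord_injective [NeZero c] (hc : c ≤ L) :
    Function.Injective (repeatWord (A := A) (c := c) L) := by
  intro f g h
  funext t
  simpa [repeatWord, Nat.mod_eq_of_lt t.isLt] using congrFun h (Fin.castLE hc t)

lemma exists_repeatWord_eq [NeZero L] [NeZero c] (hc : c ∣ L) {w : Fin L → A}
    (hw : rotate c w = w) : ∃ f : Fin c → A, repeatWord L f = w := by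
  refine ⟨fun t => w (Fin.castLE (Nat.le_of_dvd L.pos_of_neZero hc) t), funext fun j => ?_⟩
  have := congrFun (rotate_mul_eq_self hw (j / c)) ⟨j % c, (Nat.mod_le _ _).trans_lt j.isLt⟩
  refine this.symm.trans (congrArg w (Fin.ext ?_))
  simp [Nat.mod_add_div, Nat.mod_eq_of_lt j.isLt]

lemma card_filter_repeatWord [NeZero c] [DecidableEq A] (hc : c ∣ L) (f : Fin c → A) (a : A) :
    #{j | repeatWord L f j = a} = L / c * #{t | f t = a} := by
  let e : Fin (L / c) × Fin c ≃ Fin L := finProdFinEquiv.trans (finCongr (Nat.div_mul_cancel hc))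
  have he : ∀ p, repeatWord L f (e p) = f p.2 := fun p => congrArg f <| Fin.ext <| by
    simp [e, finProdFinEquiv, Nat.mod_eq_of_lt p.2.isLt]
  calc #{j | repeatWord L f j = a}
      = #{p : Fin (L / c) × Fin c | f p.2 = a} := (card_equiv e fun p => by simp [he]).symm
    _ = L / c * #{t | f t = a} := by
      rw [← univ_product_univ, filter_product_right (fun t => f t = a), card_product, card_univ,
        Fintype.card_fin]

end Periodic

lemma ZMod.fixedBy_eq_fixedBy_gcd {L : ℕ} [NeZero L] {X : Type*} [AddAction (ZMod L) X]
    (g : ZMod L) : fixedBy X g = fixedBy X ((g.val.gcd L : ℕ) : ZMod L) := by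
  apply Set.Subset.antisymm
  · have : ((g.val.gcd L : ℕ) : ZMod L) = (g⁻¹.val : ℤ) • g := by
      rw [← ZMod.mul_inv_eq_gcd, zsmul_eq_mul, Int.cast_natCast, ZMod.natCast_zmod_val, mul_comm]
    rw [this]
    exact fixedBy_subset_fixedBy_zsmul X g _
  · obtain ⟨t, ht⟩ := Nat.gcd_dvd_left g.val L
    have : g = (t : ℤ) • ((g.val.gcd L : ℕ) : ZMod L) := by
      rw [zsmul_eq_mul, Int.cast_natCast, ← Nat.cast_mul, mul_comm, ← ht, ZMod.natCast_zmod_val]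
    conv_rhs => rw [this]
    exact fixedBy_subset_fixedBy_zsmul X _ _

lemma IsAddCyclic.sum_comp_addOrderOf {G M : Type*} [AddGroup G] [Fintype G] [IsAddCyclic G]
    [AddCommMonoid M] (F : ℕ → M) :
    ∑ g : G, F (addOrderOf g) = ∑ d ∈ (Fintype.card G).divisors, d.totient • F d := by
  rw [← sum_fiberwise_of_maps_to (g := addOrderOf) fun g _ =>
    Nat.mem_divisors.mpr ⟨addOrderOf_dvd_card, Fintype.card_ne_zero⟩]
  refine sum_congr rfl fun d hd => ?_
  rw [sum_congr rfl fun g hg => congrArg F (mem_filter.mp hg).2, sum_const,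
    IsAddCyclic.card_addOrderOf_eq_totient (Nat.mem_divisors.mp hd).1]

section Necklaces
variable {L : ℕ} [NeZero L] {A : Type*} [DecidableEq A]

theorem card_mul_card_necklaces_eq_sum_card_fixedBy [Fintype A] (C : A → ℕ) :
    L * Nat.card (Quot fun w w' : {w : Fin L → A // ∀ a, #{j | w j = a} = C a} =>
      rotEquiv w.1 w'.1) = ∑ g : ZMod L, Nat.card (fixedBy (wordsWithContent L C) g) := by
  classical
  have hquot : Nat.card (Quot fun w w' : {w : Fin L → A // ∀ a, #{j | w j = a} = C a} =>
      rotEquiv w.1 w'.1) = Nat.card (orbitRel.Quotient (ZMod L) (wordsWithContent L C)) :=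
    Nat.card_congr <| Quot.congr (Equiv.subtypeEquivRight fun _ => Iff.rfl) fun w w' => by
      rw [orbitRel_apply, SubAddAction.mem_orbit_subAdd_iff, mem_orbit_symm]
      exact rotEquiv_iff_mem_orbit
  simp only [hquot, Nat.card_eq_fintype_card,
    sum_card_fixedBy_eq_card_orbits_mul_card_addGroup, ZMod.card, mul_comm]

lemma card_fixedBy_natCast_wordsWithContent {c : ℕ} [NeZero c] (hc : c ∣ L) (C : A → ℕ) :
    Nat.card (fixedBy (wordsWithContent L C) (c : ZMod L))
      = Nat.card {f : Fin c → A // ∀ a, L / c * #{t | f t = a} = C a} := by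
  have mem_fixedBy_iff (w : wordsWithContent L C) :
      w ∈ fixedBy _ (c : ZMod L) ↔ rotate c w.1 = w.1 := by
    rw [mem_fixedBy, ← SetLike.coe_eq_coe, SubAddAction.val_vadd, natCast_vadd_eq_rotate]
  let φ (f : {f : Fin c → A // ∀ a, L / c * #{t | f t = a} = C a}) :
      fixedBy (wordsWithContent L C) (c : ZMod L) :=
    ⟨⟨repeatWord L f.1, fun a => (card_filter_repeatWord hc f.1 a).trans (f.2 a)⟩,
      (mem_fixedBy_iff _).mpr (rotate_repeatWord hc f.1)⟩
  refine (Nat.card_eq_of_bijective φ ⟨fun f g hfg => ?_, fun w => ?_⟩).symm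
  · exact Subtype.ext (repeatWord_injective (Nat.le_of_dvd L.pos_of_neZero hc)
      (congrArg (fun w => w.1.1) hfg))
  · obtain ⟨f, hf⟩ := exists_repeatWord_eq hc ((mem_fixedBy_iff w.1).mp w.2)
    refine ⟨⟨f, fun a => ?_⟩, Subtype.ext (Subtype.ext hf)⟩
    rw [← card_filter_repeatWord hc, hf]
    exact w.1.2 a

lemma card_fixedBy_wordsWithContent [Fintype A] {C : A → ℕ} (hC : ∑ a, C a = L) (g : ZMod L) :
    Nat.card (fixedBy (wordsWithContent L C) g)
      = if ∀ a, addOrderOf g ∣ C a then Nat.multinomial univ (fun a => C a / addOrderOf g)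
        else 0 := by
  have hc : g.val.gcd L ∣ L := Nat.gcd_dvd_right _ _
  have : NeZero (g.val.gcd L) := ⟨(Nat.gcd_pos_of_pos_right _ L.pos_of_neZero).ne'⟩
  have horder : addOrderOf g = L / g.val.gcd L := by
    rw [← ZMod.natCast_zmod_val g, ZMod.addOrderOf_coe _ (NeZero.ne L), ZMod.val_natCast,
      Nat.mod_eq_of_lt (ZMod.val_lt g), Nat.gcd_comm]
  rw [ZMod.fixedBy_eq_fixedBy_gcd, card_fixedBy_natCast_wordsWithContent hc, horder]
  refine card_fun_mul_card_filter_eq (Nat.div_pos (Nat.le_of_dvd L.pos_of_neZero hc)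
    (NeZero.pos _)) C ?_
  rw [Fintype.card_fin, Nat.div_mul_cancel hc, hC]

theorem card_mul_card_necklaces_eq_sum_divisors [Fintype A] {C : A → ℕ} (hC : ∑ a, C a = L) :
    L * Nat.card (Quot fun w w' : {w : Fin L → A // ∀ a, #{j | w j = a} = C a} =>
      rotEquiv w.1 w'.1)
      = ∑ d ∈ L.divisors, d.totient *
          if ∀ a, d ∣ C a then Nat.multinomial univ (fun a => C a / d) else 0 := by
  rw [card_mul_card_necklaces_eq_sum_card_fixedBy,
    sum_congr rfl fun g _ => card_fixedBy_wordsWithContent hC g, IsAddCyclic.sum_comp_addOrderOf (fun d => if ∀ a, d ∣ C a then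
      Nat.multinomial univ (fun a => C a / d) else 0), ZMod.card]
  rfl

end Necklaces

lemma forall_dvd_mul_iff_of_gcd_eq_one {ι : Type*} [Fintype ι] {v : ι → ℕ} (hv : univ.gcd v = 1)
    {d m : ℕ} : (∀ i, d ∣ v i * m) ↔ d ∣ m := by
  calc (∀ i, d ∣ v i * m) ↔ d ∣ univ.gcd (fun i => v i * m) := by simp [Finset.dvd_gcd_iff]
    _ ↔ d ∣ m := by rw [Finset.gcd_mul_right, hv, one_mul, normalize_eq]

theorem count_v_balanced_necklaces_general
    (k : ℕ) (v : Fin k → ℕ)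
    (hgcd : Finset.univ.gcd v = 1)
    (m : ℕ) (hm : 1 ≤ m) :
    (∑ i, v i) * m *
      Nat.card (Quot (fun w w' : {w : Fin ((∑ i, v i) * m) → Fin k //
          ∀ i : Fin k, (Finset.univ.filter (fun j => w j = i)).card = v i * m} =>
        rotEquiv w.1 w'.1))
      = ∑ d ∈ m.divisors,
          Nat.totient d *
            (Nat.factorial ((∑ i, v i) * m / d) / ∏ i, Nat.factorial (v i * m / d)) := by
  have hV : ∑ i, v i ≠ 0 := fun h => one_ne_zero <| hgcd.symm.trans <|
    Finset.gcd_eq_zero_iff.mpr fun i hi => Finset.sum_eq_zero_iff.mp h i hi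
  have : NeZero ((∑ i, v i) * m) := ⟨mul_ne_zero hV (by omega)⟩
  rw [card_mul_card_necklaces_eq_sum_divisors (C := fun i => v i * m) (sum_mul ..).symm]
  simp_rw [forall_dvd_mul_iff_of_gcd_eq_one hgcd, mul_ite, mul_zero]
  rw [← sum_filter, Nat.divisors_filter_dvd_of_dvd (NeZero.ne _) (dvd_mul_left m _)]
  refine sum_congr rfl fun d hd => ?_
  rw [Nat.multinomial, ← Nat.sum_div fun i _ => (Nat.mem_divisors.mp hd).1.mul_left (v i),
    ← sum_mul]

/-- Counting `v`-balanced necklaces: with `V = Σ i, v i`, `gcd v = 1` and `L = V·m`,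
if `N` is the number of rotation-equivalence classes of words of length `L` over `Fin k`
with exactly `v i · m` occurrences of each letter `i`, then
`L · N = Σ_{d ∣ m} φ(d) · (L/d)! / ∏ i, (v i · m / d)!`. -/
theorem count_v_balanced_necklaces
    (k : ℕ) (hk : 1 ≤ k) (v : Fin k → ℕ) (hv : ∀ i, 1 ≤ v i)
    (hgcd : Finset.univ.gcd v = 1)
    (m : ℕ) (hm : 1 ≤ m) :
    (∑ i, v i) * m *
      Nat.card (Quot (fun w w' : {w : Fin ((∑ i, v i) * m) → Fin k //
          ∀ i : Fin k, (Finset.univ.filter (fun j => w j = i)).card = v i * m} =>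
        rotEquiv w.1 w'.1))
      = ∑ d ∈ m.divisors,
          Nat.totient d *
            (Nat.factorial ((∑ i, v i) * m / d) / ∏ i, Nat.factorial (v i * m / d)) :=
  count_v_balanced_necklaces_general k v hgcd m hm
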